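/- arXiv:1302.6899 — 6 statements merged into one kernel-verified Lean document; each statement's English description precedes it below -/
import Mathlib

section
/- If ρ is a positive definite Hermitian matrix and s ∈ [0,1], then for any Hermitian matrix δρ the Sylvester equation s·δω·ρ + ρ·δω = δρ has a unique solution δω. -/
/-!
Conjugating by the unitary that diagonalizes `ρ` turns the operator
`X ↦ s • (X * ρ) + ρ * X` into entrywise multiplication by the matrix `s λⱼ + λᵢ` built from
the eigenvalues of `ρ`. These entries are positive when `ρ` is positive definite and `s ≥ 0`,
so the operator is injective, hence bijective on the finite-dimensional space of matrices.
-/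

open Matrix ComplexOrder

section SylvesterMap

variable {R A B F : Type*} [CommSemiring R] [Semiring A] [Algebra R A] [Semiring B] [Algebra R B]

def sylvesterMap (s : R) (a : A) : A →ₗ[R] A :=
  s • LinearMap.mulRight R a + LinearMap.mulLeft R a

@[simp]
theorem sylvesterMap_apply (s : R) (a x : A) : sylvesterMap s a x = s • (x * a) + a * x :=
  rfl

theorem sylvesterMap_map [FunLike F A B] [AlgHomClass F R A B] (φ : F) (s : R) (a x : A) :
    sylvesterMap s (φ a) (φ x) = φ (sylvesterMap s a x) := by
  simp

theorem sylvesterMap_map_injective_iff [EquivLike F A B] [AlgEquivClass F R A B] (φ : F)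
    (s : R) (a : A) :
    Function.Injective (sylvesterMap s (φ a)) ↔ Function.Injective (sylvesterMap s a) := by
  have hcomm : sylvesterMap s (φ a) ∘ φ = φ ∘ sylvesterMap s a :=
    funext (sylvesterMap_map φ s a)
  rw [← EquivLike.injective_comp φ, hcomm, EquivLike.comp_injective]

end SylvesterMap

section Diagonal

variable {n R : Type*} [Fintype n] [DecidableEq n]

theorem sylvesterMap_diagonal_apply [CommSemiring R] (s : R) (d : n → R) (Y : Matrix n n R)
    (i j : n) : sylvesterMap s (diagonal d) Y i j = (s * d j + d i) * Y i j := by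
  simp only [sylvesterMap_apply, Matrix.add_apply, Matrix.smul_apply, mul_diagonal, diagonal_mul,
    smul_eq_mul]
  ring

theorem sylvesterMap_diagonal_injective [CommRing R] [NoZeroDivisors R] {s : R} {d : n → R}
    (h : ∀ i j, s * d j + d i ≠ 0) : Function.Injective (sylvesterMap s (diagonal d)) := by
  refine (injective_iff_map_eq_zero _).mpr fun Y hY => ext fun i j => ?_
  have hij : (s * d j + d i) * Y i j = 0 := by
    rw [← sylvesterMap_diagonal_apply, hY, Matrix.zero_apply]
  exact (mul_eq_zero.mp hij).resolve_left (h i j)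

theorem Matrix.PosDef.sylvesterMap_injective {𝕜 : Type*} [RCLike 𝕜] {ρ : Matrix n n 𝕜}
    (hρ : ρ.PosDef) {s : ℝ} (hs : 0 ≤ s) :
    Function.Injective (sylvesterMap (s : 𝕜) ρ) := by
  rw [hρ.isHermitian.spectral_theorem, sylvesterMap_map_injective_iff]
  refine sylvesterMap_diagonal_injective fun i j => ?_
  have hpos : 0 < s * hρ.isHermitian.eigenvalues j + hρ.isHermitian.eigenvalues i :=
    add_pos_of_nonneg_of_pos (mul_nonneg hs (hρ.eigenvalues_pos j).le) (hρ.eigenvalues_pos i)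
  rw [Function.comp_apply, Function.comp_apply, ← RCLike.ofReal_mul, ← RCLike.ofReal_add]
  exact RCLike.ofReal_ne_zero.mpr hpos.ne'

end Diagonal

theorem sylvester_unique_solution_general {n : ℕ} (ρ δρ : Matrix (Fin n) (Fin n) ℂ)
    (hρ : ρ.PosDef) (s : ℝ) (hs : s ∈ Set.Icc (0:ℝ) 1) :
    ∃! δω : Matrix (Fin n) (Fin n) ℂ, (s : ℂ) • (δω * ρ) + ρ * δω = δρ := by
  have hinj := hρ.sylvesterMap_injective hs.1
  exact Function.Bijective.existsUnique ⟨hinj, LinearMap.injective_iff_surjective.mp hinj⟩ δρ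

theorem sylvester_unique_solution {n : ℕ} (ρ δρ : Matrix (Fin n) (Fin n) ℂ)
    (hρ : ρ.PosDef) (hδρ : δρ.IsHermitian) (s : ℝ) (hs : s ∈ Set.Icc (0:ℝ) 1) :
    ∃! δω : Matrix (Fin n) (Fin n) ℂ, (s : ℂ) • (δω * ρ) + ρ * δω = δρ :=
  sylvester_unique_solution_general ρ δρ hρ s hs
end

section
/- Let ρ be a positive definite Hermitian matrix with trace 1, δρ a Hermitian matrix, and δω the solution of ρ·δω + δω·ρ = δρ. Then Tr(δρ·δω) = 2·Tr(δω·ρ·δω), and this quantity is a nonnegative real number, equal to zero if and only if δρ = 0. -/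
open Matrix ComplexOrder

/-!
For positive definite `ρ`, `Tr(Zᴴ ρ Z)` is a nonnegative real vanishing only at `Z = 0`.
Taking the trace of `Zᴴ (ρ Z + Z ρ)` shows that the Lyapunov equation has at most one solution,
so `δω` is Hermitian; cycling the trace gives `Tr(δρ δω) = 2 Tr(δωᴴ ρ δω)`.
-/

namespace Matrix

variable {m n 𝕜 : Type*} [Fintype m] [Fintype n] [RCLike 𝕜] {A : Matrix n n 𝕜}

lemma trace_mul_add_mul_mul {R : Type*} [CommRing R] (A Z : Matrix n n R) :
    ((A * Z + Z * A) * Z).trace = 2 * (Z * A * Z).trace := by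
  rw [add_mul, trace_add, trace_mul_comm (A * Z), ← Matrix.mul_assoc, two_mul]

namespace PosDef

lemma conjTranspose_mul_mul_same_eq_zero_iff (hA : A.PosDef) {B : Matrix n m 𝕜} :
    Bᴴ * A * B = 0 ↔ B = 0 := by
  refine ⟨fun h ↦ mulVec_injective <| funext fun x ↦ ?_, fun h ↦ by simp [h]⟩
  rw [zero_mulVec]
  by_contra hBx
  have hpos := hA.dotProduct_mulVec_pos hBx
  simp only [star_mulVec, dotProduct_mulVec, vecMul_vecMul, h, vecMul_zero,
    zero_dotProduct, lt_self_iff_false] at hpos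

lemma trace_conjTranspose_mul_mul_same_eq_zero_iff (hA : A.PosDef) {B : Matrix n m 𝕜} :
    (Bᴴ * A * B).trace = 0 ↔ B = 0 :=
  (hA.posSemidef.conjTranspose_mul_mul_same B).trace_eq_zero_iff.trans
    hA.conjTranspose_mul_mul_same_eq_zero_iff

lemma eq_zero_of_mul_add_mul_eq_zero (hA : A.PosDef) {Z : Matrix n n 𝕜}
    (h : A * Z + Z * A = 0) : Z = 0 := by
  have hsum : (Zᴴ * A * Z).trace + (Z * A * Zᴴ).trace = 0 := by
    rw [trace_mul_cycle Z, ← trace_add, Matrix.mul_assoc, Matrix.mul_assoc, ← Matrix.mul_add, h,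
      Matrix.mul_zero, trace_zero]
  have hZ := (hA.posSemidef.conjTranspose_mul_mul_same Z).trace_nonneg
  have hZ' := (hA.posSemidef.mul_mul_conjTranspose_same Z).trace_nonneg
  exact hA.trace_conjTranspose_mul_mul_same_eq_zero_iff.mp
    ((add_eq_zero_iff_of_nonneg hZ hZ').mp hsum).1

lemma isHermitian_of_mul_add_mul (hA : A.PosDef) {B Z : Matrix n n 𝕜} (hB : B.IsHermitian)
    (h : A * Z + Z * A = B) : Z.IsHermitian := by
  refine (sub_eq_zero.mp (hA.eq_zero_of_mul_add_mul_eq_zero ?_)).symm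
  have hstar : A * Zᴴ + Zᴴ * A = B := by
    rw [← hB.eq, ← h, conjTranspose_add, conjTranspose_mul, conjTranspose_mul, hA.1.eq,
      add_comm]
  rw [mul_sub, sub_mul, sub_add_sub_comm, h, hstar, sub_self]

end PosDef

end Matrix

theorem bures_form_nonneg_general {n : ℕ} (ρ δρ δω : Matrix (Fin n) (Fin n) ℂ)
    (hρ : ρ.PosDef) (hδρ : δρ.IsHermitian)
    (hδω : ρ * δω + δω * ρ = δρ) :
    (δρ * δω).trace = 2 * (δω * ρ * δω).trace ∧
    (∃ r : ℝ, 0 ≤ r ∧ (δρ * δω).trace = (r : ℂ)) ∧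
    ((δρ * δω).trace = 0 ↔ δρ = 0) := by
  have hω : δωᴴ = δω := (hρ.isHermitian_of_mul_add_mul hδρ hδω).eq
  have hid : (δρ * δω).trace = 2 * (δω * ρ * δω).trace :=
    hδω ▸ trace_mul_add_mul_mul ρ δω
  have hnonneg : 0 ≤ (δω * ρ * δω).trace := by
    simpa only [hω] using (hρ.posSemidef.conjTranspose_mul_mul_same δω).trace_nonneg
  obtain ⟨r, hr, hr_eq⟩ := RCLike.nonneg_iff_exists_ofReal.mp hnonneg
  refine ⟨hid, ⟨2 * r, by positivity, by rw [hid, ← hr_eq]; push_cast; rfl⟩, ?_⟩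
  have hzero : (δω * ρ * δω).trace = 0 ↔ δω = 0 := by
    simpa only [hω] using hρ.trace_conjTranspose_mul_mul_same_eq_zero_iff (B := δω)
  rw [hid, mul_eq_zero, or_iff_right two_ne_zero, hzero]
  constructor
  · rintro rfl
    simpa using hδω.symm
  · rintro rfl
    exact hρ.eq_zero_of_mul_add_mul_eq_zero hδω

theorem bures_form_nonneg {n : ℕ} (ρ δρ δω : Matrix (Fin n) (Fin n) ℂ)
    (hρ : ρ.PosDef) (htr : ρ.trace = 1) (hδρ : δρ.IsHermitian)
    (hδω : ρ * δω + δω * ρ = δρ) :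
    (δρ * δω).trace = 2 * (δω * ρ * δω).trace ∧
    (∃ r : ℝ, 0 ≤ r ∧ (δρ * δω).trace = (r : ℂ)) ∧
    ((δρ * δω).trace = 0 ↔ δρ = 0) :=
  bures_form_nonneg_general ρ δρ δω hρ hδρ hδω
end

section
/- For ρ Hermitian positive definite, s ∈ (0,1], δρ Hermitian, and δω_s the solution of s·δω_s·ρ + ρ·δω_s = δρ, the quantity Tr(δρ·(δω_s + δω_s†)/2) is a nonnegative real number. -/
open Matrix ComplexOrder

namespace Matrix

variable {ι 𝕜 : Type*} [Fintype ι] [RCLike 𝕜]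

/-- The Sylvester equation gives `A Xᴴ = s • X ρ Xᴴ + ρ X Xᴴ`, and `tr (ρ X Xᴴ) = tr (Xᴴ ρ X)`,
so both terms are traces of positive semidefinite matrices. -/
theorem trace_mul_conjTranspose_nonneg_of_sylvester {ρ A X : Matrix ι ι 𝕜} (hρ : ρ.PosSemidef)
    {s : 𝕜} (hs : 0 ≤ s) (hX : s • (X * ρ) + ρ * X = A) : 0 ≤ (A * Xᴴ).trace := by
  have hsplit : A * Xᴴ = s • (X * ρ * Xᴴ) + ρ * X * Xᴴ := by
    rw [← hX]; noncomm_ring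
  have hρX : (ρ * X * Xᴴ).trace = (Xᴴ * ρ * X).trace := by
    rw [trace_mul_comm, ← mul_assoc]
  rw [hsplit, trace_add, trace_smul, hρX]
  exact add_nonneg (smul_nonneg hs (hρ.mul_mul_conjTranspose_same X).trace_nonneg)
    (hρ.conjTranspose_mul_mul_same X).trace_nonneg

theorem IsHermitian.trace_mul_conjTranspose {A : Matrix ι ι 𝕜} (hA : A.IsHermitian)
    (X : Matrix ι ι 𝕜) : (A * Xᴴ).trace = star (A * X).trace := by
  rw [← trace_conjTranspose, conjTranspose_mul, hA.eq, trace_mul_comm]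

theorem IsHermitian.trace_mul_half_add_conjTranspose {A X : Matrix ι ι 𝕜} (hA : A.IsHermitian)
    (h : 0 ≤ (A * Xᴴ).trace) : (A * ((1 / 2 : 𝕜) • (X + Xᴴ))).trace = (A * Xᴴ).trace := by
  -- A nonnegative complex number is real, so it equals its conjugate `tr (A X)`.
  have htrace : (A * X).trace = (A * Xᴴ).trace := by
    rw [hA.trace_mul_conjTranspose] at h ⊢
    exact (star_star _).symm.trans (IsSelfAdjoint.of_nonneg h).star_eq
  rw [Matrix.mul_smul, trace_smul, mul_add, trace_add, htrace, smul_eq_mul]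
  ring

end Matrix

theorem petz_form_nonneg {n : ℕ} (ρ δρ δω : Matrix (Fin n) (Fin n) ℂ)
    (hρ : ρ.PosDef) (hδρ : δρ.IsHermitian) (s : ℝ) (hs : s ∈ Set.Ioc (0:ℝ) 1)
    (hδω : (s : ℂ) • (δω * ρ) + ρ * δω = δρ) :
    ∃ r : ℝ, 0 ≤ r ∧ (δρ * ((1/2 : ℂ) • (δω + δωᴴ))).trace = (r : ℂ) := by
  have hnonneg : 0 ≤ (δρ * δωᴴ).trace :=
    trace_mul_conjTranspose_nonneg_of_sylvester hρ.posSemidef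
      (Complex.zero_le_real.mpr hs.1.le) hδω
  obtain ⟨r, hr, hr_eq⟩ := RCLike.nonneg_iff_exists_ofReal.mp hnonneg
  exact ⟨r, hr, by rw [hδρ.trace_mul_half_add_conjTranspose hnonneg, ← hr_eq]; rfl⟩
end

section
/- Let ρ_∞ be Hermitian positive definite, ρ Hermitian, and G the solution of ρ_∞·G + G·ρ_∞ = ρ - ρ_∞. For a Lindblad generator with Hamiltonian H Hermitian and operators L_k, if ρ_∞ is an equilibrium (L(ρ_∞)=0) and ρ evolves by dρ/dt = L(ρ), then d/dt Tr(ρ_∞ G²) = -∑_k Tr([G,L_k]·ρ_∞·[G,L_k]†). In particular, Tr(ρ_∞G²) is nonincreasing along trajectories. -/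
/-!
Pair the generator with its Heisenberg-picture dual `𝓛†`, so that
`Tr(𝓛(δρ) G) = Tr(δρ 𝓛†(G)) = Tr(ρ (G 𝓛†(G) + 𝓛†(G) G))` by the Lyapunov equation
`δρ = ρ G + G ρ`. The dual generator satisfies the carré du champ identity
`𝓛†(G²) - G 𝓛†(G) - 𝓛†(G) G = ∑ₖ [Lₖ†, G] [G, Lₖ]`, and `Tr(ρ 𝓛†(G²)) = Tr(𝓛(ρ) G²) = 0`
at equilibrium; for Hermitian `G`, `[Lₖ†, G] = [G, Lₖ]†`, so what is left is
`-∑ₖ Tr([G, Lₖ] ρ [G, Lₖ]†)`, a sum of traces of positive semidefinite matrices.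
-/

open Matrix ComplexOrder

section Lindblad

variable {n ι : Type*} [Fintype n] [Fintype ι]

noncomputable def lindbladian (H : Matrix n n ℂ) (L : ι → Matrix n n ℂ) (ρ : Matrix n n ℂ) :
    Matrix n n ℂ :=
  -Complex.I • (H * ρ - ρ * H)
    - (1/2 : ℂ) • ∑ k, ((L k)ᴴ * L k * ρ + ρ * ((L k)ᴴ * L k) - (2:ℂ) • (L k * ρ * (L k)ᴴ))

noncomputable def lindbladianDual (H : Matrix n n ℂ) (L : ι → Matrix n n ℂ) (X : Matrix n n ℂ) :
    Matrix n n ℂ :=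
  Complex.I • (H * X - X * H)
    - (1/2 : ℂ) • ∑ k, ((L k)ᴴ * L k * X + X * ((L k)ᴴ * L k) - (2:ℂ) • ((L k)ᴴ * X * L k))

theorem trace_lindbladian_mul (H : Matrix n n ℂ) (L : ι → Matrix n n ℂ) (ρ X : Matrix n n ℂ) :
    (lindbladian H L ρ * X).trace = (ρ * lindbladianDual H L X).trace := by
  have hLeft : ∀ A : Matrix n n ℂ, (A * ρ * X).trace = (ρ * (X * A)).trace := fun A => by
    rw [Matrix.mul_assoc, trace_mul_comm, Matrix.mul_assoc]
  have hJump : ∀ A : Matrix n n ℂ, (A * ρ * Aᴴ * X).trace = (ρ * (Aᴴ * X * A)).trace :=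
    fun A => by
      rw [Matrix.mul_assoc, Matrix.mul_assoc, trace_mul_comm]
      simp only [Matrix.mul_assoc]
  simp only [lindbladian, lindbladianDual, Matrix.sub_mul, Matrix.mul_sub, Matrix.add_mul,
    Matrix.mul_add, smul_mul_assoc, mul_smul_comm, Finset.sum_mul, Finset.mul_sum, trace_sub,
    trace_add, trace_smul, trace_sum, hLeft, hJump, ← Matrix.mul_assoc, smul_eq_mul]
  simp only [add_comm]
  ring

theorem lindbladianDual_mul_self_sub (H : Matrix n n ℂ) (L : ι → Matrix n n ℂ)
    (G : Matrix n n ℂ) :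
    lindbladianDual H L (G * G) - (G * lindbladianDual H L G + lindbladianDual H L G * G)
      = ∑ k, ((L k)ᴴ * G - G * (L k)ᴴ) * (G * L k - L k * G) := by
  simp only [lindbladianDual, Matrix.sub_mul, Matrix.mul_sub, Matrix.add_mul, Matrix.mul_add,
    smul_mul_assoc, mul_smul_comm, Finset.sum_mul, Finset.mul_sum, smul_sub, smul_add,
    Finset.smul_sum, Matrix.mul_assoc]
  rw [sub_add_sub_comm, ← Finset.sum_add_distrib, sub_sub_sub_comm, ← Finset.sum_sub_distrib,
    sub_eq_iff_eq_add, ← Finset.sum_add_distrib, Finset.sum_eq_zero fun k _ => by module]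
  module

theorem trace_lindbladian_anticommutator_mul {H : Matrix n n ℂ} {L : ι → Matrix n n ℂ}
    {ρ : Matrix n n ℂ} (hρ : lindbladian H L ρ = 0) (G : Matrix n n ℂ) :
    (lindbladian H L (ρ * G + G * ρ) * G).trace
      = -∑ k, (ρ * (((L k)ᴴ * G - G * (L k)ᴴ) * (G * L k - L k * G))).trace := by
  set D := lindbladianDual H L
  calc (lindbladian H L (ρ * G + G * ρ) * G).trace
      = ((ρ * G + G * ρ) * D G).trace := trace_lindbladian_mul H L _ G
    _ = (ρ * (G * D G + D G * G)).trace := by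
      rw [Matrix.add_mul, Matrix.mul_add, trace_add, trace_add, Matrix.mul_assoc,
        Matrix.mul_assoc, trace_mul_comm G, Matrix.mul_assoc]
    _ = (ρ * D (G * G)).trace
          - (ρ * ∑ k, ((L k)ᴴ * G - G * (L k)ᴴ) * (G * L k - L k * G)).trace := by
      rw [← lindbladianDual_mul_self_sub, Matrix.mul_sub, trace_sub, sub_sub_cancel]
    _ = _ := by
      rw [← trace_lindbladian_mul, hρ, Matrix.zero_mul, trace_zero, zero_sub, Finset.mul_sum,
        trace_sum]

theorem Matrix.IsHermitian.trace_lindbladian_anticommutator_mul {H : Matrix n n ℂ}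
    {L : ι → Matrix n n ℂ} {ρ G : Matrix n n ℂ} (hG : G.IsHermitian)
    (hρ : lindbladian H L ρ = 0) :
    (lindbladian H L (ρ * G + G * ρ) * G).trace
      = -∑ k, ((G * L k - L k * G) * ρ * (G * L k - L k * G)ᴴ).trace := by
  have hAdj : ∀ k, (G * L k - L k * G)ᴴ = (L k)ᴴ * G - G * (L k)ᴴ := fun k => by
    rw [conjTranspose_sub, conjTranspose_mul, conjTranspose_mul, hG.eq]
  rw [_root_.trace_lindbladian_anticommutator_mul hρ G]
  congr 1
  refine Finset.sum_congr rfl fun k _ => ?_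
  rw [hAdj, Matrix.mul_assoc, trace_mul_comm (G * L k - L k * G), Matrix.mul_assoc]

end Lindblad

theorem lindblad_bures_derivative_general {n m : ℕ} (H : Matrix (Fin n) (Fin n) ℂ)
    (L : Fin m → Matrix (Fin n) (Fin n) ℂ)
    (Lop : Matrix (Fin n) (Fin n) ℂ → Matrix (Fin n) (Fin n) ℂ)
    (hLop : ∀ σ, Lop σ = -Complex.I • (H * σ - σ * H)
      - (1/2 : ℂ) • ∑ k, ((L k)ᴴ * L k * σ + σ * ((L k)ᴴ * L k)
          - (2:ℂ) • (L k * σ * (L k)ᴴ)))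
    (ρinf : Matrix (Fin n) (Fin n) ℂ) (hρinf : ρinf.PosDef) (heq : Lop ρinf = 0)
    (δρ G : Matrix (Fin n) (Fin n) ℂ) (hG : G.IsHermitian)
    (hLyap : ρinf * G + G * ρinf = δρ) :
    ((Lop δρ * G).trace).re
      = -∑ k, (((G * L k - L k * G) * ρinf * (G * L k - L k * G)ᴴ).trace).re ∧
    ((Lop δρ * G).trace).re ≤ 0 := by
  obtain rfl : Lop = lindbladian H L := funext hLop
  subst hLyap
  have hdissipation : 0 ≤ ∑ k, (((G * L k - L k * G) * ρinf * (G * L k - L k * G)ᴴ).trace).re :=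
    Finset.sum_nonneg fun k _ => (Complex.nonneg_iff.mp
      (hρinf.posSemidef.mul_mul_conjTranspose_same _).trace_nonneg).1
  rw [hG.trace_lindbladian_anticommutator_mul heq, Complex.neg_re, Complex.re_sum]
  exact ⟨rfl, neg_nonpos.mpr hdissipation⟩

/-- Algebraic form of `d/dt Tr(ρinf G²) = -∑ₖ Tr([G,Lₖ] ρinf [G,Lₖ]†)` along the
Lindblad flow, using the equilibrium condition `L(ρinf) = 0`. -/
theorem lindblad_bures_derivative {n m : ℕ} (H : Matrix (Fin n) (Fin n) ℂ)
    (hH : H.IsHermitian) (L : Fin m → Matrix (Fin n) (Fin n) ℂ)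
    (Lop : Matrix (Fin n) (Fin n) ℂ → Matrix (Fin n) (Fin n) ℂ)
    (hLop : ∀ σ, Lop σ = -Complex.I • (H * σ - σ * H)
      - (1/2 : ℂ) • ∑ k, ((L k)ᴴ * L k * σ + σ * ((L k)ᴴ * L k)
          - (2:ℂ) • (L k * σ * (L k)ᴴ)))
    (ρinf : Matrix (Fin n) (Fin n) ℂ) (hρinf : ρinf.PosDef) (heq : Lop ρinf = 0)
    (δρ G : Matrix (Fin n) (Fin n) ℂ) (hδρ : δρ.IsHermitian) (hG : G.IsHermitian)
    (hLyap : ρinf * G + G * ρinf = δρ) :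
    ((Lop δρ * G).trace).re
      = -∑ k, (((G * L k - L k * G) * ρinf * (G * L k - L k * G)ᴴ).trace).re ∧
    ((Lop δρ * G).trace).re ≤ 0 :=
  lindblad_bures_derivative_general H L Lop hLop ρinf hρinf heq δρ G hG hLyap
end

section
/- Let ρ be Hermitian positive definite, δρ Hermitian with solution δω of ρδω + δωρ = δρ, and H Hermitian. Define B = δρ·H·δω + δρ·H·δω - 2δω·δω·ρ·H (with δω Hermitian). Then Tr(δρ·H·δω - δω·δω·ρ·H) is real; equivalently, the Hamiltonian part -i[H,·] of the Lindblad evolution contributes zero to d/dt Tr(δρ·δω) when ρ and δρ both evolve by -i[H,·] and δω is updated accordingly. -/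
open Matrix ComplexOrder

/- After substituting `δρ = ρδω + δωρ` and pulling out the common factor `-2i`, the claim is
`Tr([H, δρ] δω) = Tr([H, ρ] δω²)`, which is cyclicity of the trace:
`Tr(Hδωρδω) = Tr(ρδωHδω)` and `Tr(δωρHδω) = Tr(ρHδω²)`. -/

theorem Matrix.trace_commutator_anticommutator_mul {m R : Type*} [Fintype m] [CommRing R]
    (H ρ ω : Matrix m m R) :
    ((H * (ρ * ω + ω * ρ) - (ρ * ω + ω * ρ) * H) * ω).trace
      = ((H * ρ - ρ * H) * (ω * ω)).trace := by
  have hHωρω : (H * ω * (ρ * ω)).trace = (ρ * ω * (H * ω)).trace := trace_mul_comm _ _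
  have hωρHω : (ω * (ρ * H * ω)).trace = (ρ * H * ω * ω).trace := trace_mul_comm _ _
  simp only [Matrix.mul_add, Matrix.add_mul, Matrix.sub_mul, trace_sub, trace_add,
    ← Matrix.mul_assoc] at hHωρω hωρHω ⊢
  rw [hHωρω, hωρHω]
  ring

theorem hamiltonian_part_preserves_bures_general {n : ℕ}
    (ρ δρ δω H : Matrix (Fin n) (Fin n) ℂ)
    (hδω : ρ * δω + δω * ρ = δρ) :
    ((-Complex.I • (H * δρ - δρ * H)) * ((2:ℂ) • δω)
      - (-Complex.I • (H * ρ - ρ * H)) * ((2:ℂ) • (δω * δω))).trace = 0 := by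
  subst hδω
  simp only [smul_mul_smul_comm, ← smul_sub, trace_smul, trace_sub,
    trace_commutator_anticommutator_mul, sub_self, smul_zero]

/-- The Hamiltonian part of the Lindblad evolution leaves the Bures quadratic
form invariant: `Tr((-i[H,δρ])·2δω - (-i[H,ρ])·2δω²) = 0`. -/
theorem hamiltonian_part_preserves_bures {n : ℕ}
    (ρ δρ δω H : Matrix (Fin n) (Fin n) ℂ)
    (hρ : ρ.PosDef) (hδρ : δρ.IsHermitian) (hH : H.IsHermitian)
    (hδω : ρ * δω + δω * ρ = δρ) (hδωH : δω.IsHermitian) :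
    ((-Complex.I • (H * δρ - δρ * H)) * ((2:ℂ) • δω)
      - (-Complex.I • (H * ρ - ρ * H)) * ((2:ℂ) • (δω * δω))).trace = 0 :=
  hamiltonian_part_preserves_bures_general ρ δρ δω H hδω
end

section
/- Any Lindblad equation on matrices over ℂ^{n+1} whose channel list includes an operator L_k = c·a proportional (c ≠ 0) to the truncated annihilation operator a, and which has a Hermitian positive definite trace-1 equilibrium ρ_∞, satisfies: the only Hermitian G solving ρ_∞G + Gρ_∞ = ρ - ρ_∞ with ∑_k Tr([G,L_k]ρ_∞[G,L_k]†) = 0 and Tr(ρ) = 1 is G = 0, i.e., ρ = ρ_∞. -/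
open Matrix ComplexOrder

/-- The truncated annihilation operator on `ℂ^{n+1}`: `a |k⟩ = √k |k-1⟩`. -/
noncomputable def ann (n : ℕ) : Matrix (Fin (n+1)) (Fin (n+1)) ℂ :=
  fun j k => if (j : ℕ) + 1 = (k : ℕ) then (Real.sqrt (k : ℕ) : ℂ) else 0

/-!
Vanishing dissipation makes every commutator `[G, L_k]` vanish: each summand is the trace of a
positive semidefinite matrix `X ρ_∞ Xᴴ`, and such a trace is zero only when `X = 0` because `ρ_∞`
is positive definite. So the Hermitian `G` commutes with `a` and with `a†`. Then `G` preserves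
`ker a = ℂ e₀`, so `G e₀ = μ e₀`, and since `e₀` is cyclic for `a†`, `G = μ • 1`. Taking traces
in the Lyapunov equation gives `2μ = Tr ρ - Tr ρ_∞ = 0`.
-/

namespace Matrix

variable {ι m n R 𝕜 : Type*} [Fintype ι] [Fintype m] [Fintype n]

section CommRing

variable [CommRing R] [PartialOrder R] [StarRing R]

lemma PosDef.eq_zero_of_mul_mul_conjTranspose_eq_zero {ρ : Matrix n n R} (hρ : ρ.PosDef)
    {X : Matrix m n R} (h : X * ρ * Xᴴ = 0) : X = 0 := by
  classical
  rw [← conjTranspose_eq_zero]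
  refine ext_of_mulVec_single fun i => ?_
  by_contra hne
  rw [zero_mulVec] at hne
  have := hρ.dotProduct_mulVec_pos hne
  rw [star_mulVec, conjTranspose_conjTranspose, ← dotProduct_mulVec, mulVec_mulVec,
    mulVec_mulVec, h, zero_mulVec, dotProduct_zero] at this
  exact this.false

end CommRing

section RCLike

variable [RCLike 𝕜]

lemma PosDef.trace_mul_mul_conjTranspose_eq_zero_iff {ρ : Matrix n n 𝕜} (hρ : ρ.PosDef)
    (X : Matrix m n 𝕜) : (X * ρ * Xᴴ).trace = 0 ↔ X = 0 := by
  rw [(hρ.posSemidef.mul_mul_conjTranspose_same X).trace_eq_zero_iff]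
  exact ⟨hρ.eq_zero_of_mul_mul_conjTranspose_eq_zero, fun hX => by simp [hX]⟩

lemma PosDef.sum_trace_mul_mul_conjTranspose_eq_zero_iff {ρ : Matrix n n 𝕜} (hρ : ρ.PosDef)
    (X : ι → Matrix m n 𝕜) : ∑ k, (X k * ρ * (X k)ᴴ).trace = 0 ↔ ∀ k, X k = 0 := by
  rw [Finset.sum_eq_zero_iff_of_nonneg fun k _ =>
    (hρ.posSemidef.mul_mul_conjTranspose_same (X k)).trace_nonneg]
  simp only [Finset.mem_univ, true_implies, hρ.trace_mul_mul_conjTranspose_eq_zero_iff]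

end RCLike

end Matrix

section ann

variable {n : ℕ}

lemma ofReal_sqrt_succ_ne_zero (k : ℕ) : (Real.sqrt (k+1) : ℂ) ≠ 0 :=
  Complex.ofReal_ne_zero.mpr (Real.sqrt_pos.mpr k.cast_add_one_pos).ne'

lemma ann_mulVec_apply (v : Fin (n+1) → ℂ) (k : ℕ) (hk : k + 1 < n + 1) :
    (ann n *ᵥ v) ⟨k, by omega⟩ = (Real.sqrt (k+1) : ℂ) * v ⟨k+1, hk⟩ := by
  rw [mulVec, dotProduct, Finset.sum_eq_single ⟨k+1, hk⟩]
  · simp [ann]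
  · intro j _ hj
    have : k + 1 ≠ (j : ℕ) := fun h => hj (Fin.ext h.symm)
    simp [ann, this]
  · simp

lemma ann_mulVec_single_zero : ann n *ᵥ Pi.single 0 1 = 0 := by
  ext j
  simp [ann]

lemma eq_smul_single_zero_of_ann_mulVec_eq_zero {v : Fin (n+1) → ℂ} (h : ann n *ᵥ v = 0) :
    v = v 0 • Pi.single 0 1 := by
  ext ⟨_ | k, hk⟩
  · simp
  · have hv := ann_mulVec_apply v k hk
    rw [h, Pi.zero_apply, eq_comm, mul_eq_zero] at hv
    simp [hv.resolve_left (ofReal_sqrt_succ_ne_zero k)]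

lemma conjTranspose_ann_mulVec_single (k : ℕ) (hk : k + 1 < n + 1) :
    (ann n)ᴴ *ᵥ Pi.single ⟨k, by omega⟩ 1 = (Real.sqrt (k+1) : ℂ) • Pi.single ⟨k+1, hk⟩ 1 := by
  ext j
  by_cases hj : (j : ℕ) = k + 1
  · simp [ann, Pi.single_apply, Fin.ext_iff, hj]
  · simp [ann, Fin.ext_iff, hj, Ne.symm hj]

lemma eq_smul_one_of_commute_conjTranspose_ann {G : Matrix (Fin (n+1)) (Fin (n+1)) ℂ} {μ : ℂ}
    (hcomm : Commute G (ann n)ᴴ) (h₀ : G *ᵥ Pi.single 0 1 = μ • Pi.single 0 1) :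
    G = μ • 1 := by
  refine ext_of_mulVec_single fun ⟨k, hk⟩ => ?_
  rw [smul_mulVec, one_mulVec]
  induction k with
  | zero => exact h₀
  | succ k ih =>
    have key : G *ᵥ ((ann n)ᴴ *ᵥ Pi.single ⟨k, by omega⟩ 1) =
        μ • ((ann n)ᴴ *ᵥ Pi.single ⟨k, by omega⟩ 1) := by
      rw [mulVec_mulVec, hcomm.eq, ← mulVec_mulVec, ih (by omega), mulVec_smul]
    rw [conjTranspose_ann_mulVec_single k hk, mulVec_smul, smul_comm] at key
    exact smul_right_injective _ (ofReal_sqrt_succ_ne_zero k) key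

lemma Matrix.IsHermitian.eq_smul_one_of_commute_ann {G : Matrix (Fin (n+1)) (Fin (n+1)) ℂ}
    (hG : G.IsHermitian) (hcomm : Commute G (ann n)) : G = G 0 0 • 1 := by
  refine eq_smul_one_of_commute_conjTranspose_ann ?_ ?_
  · simpa only [star_eq_conjTranspose, hG.eq] using hcomm.star_star
  · have hker : ann n *ᵥ (G *ᵥ Pi.single 0 1) = 0 := by
      rw [mulVec_mulVec, ← hcomm.eq, ← mulVec_mulVec, ann_mulVec_single_zero, mulVec_zero]
    simpa using eq_smul_single_zero_of_ann_mulVec_eq_zero hker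

end ann

theorem vanishing_dissipation_forces_equilibrium_general {n m : ℕ}
    (L : Fin m → Matrix (Fin (n+1)) (Fin (n+1)) ℂ)
    (c : ℂ) (hc : c ≠ 0) (k₀ : Fin m) (hk₀ : L k₀ = c • ann n)
    (ρinf ρ G : Matrix (Fin (n+1)) (Fin (n+1)) ℂ)
    (hρinf : ρinf.PosDef) (htrinf : ρinf.trace = 1)
    (htr : ρ.trace = 1)
    (hG : G.IsHermitian) (hLyap : ρinf * G + G * ρinf = ρ - ρinf)
    (hdiss : ∑ k, ((G * L k - L k * G) * ρinf * (G * L k - L k * G)ᴴ).trace = 0) :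
    G = 0 ∧ ρ = ρinf := by
  have hcomm : Commute G (ann n) := by
    have h := (hρinf.sum_trace_mul_mul_conjTranspose_eq_zero_iff _).1 hdiss k₀
    rw [hk₀, mul_smul_comm, smul_mul_assoc, ← smul_sub, smul_eq_zero, sub_eq_zero] at h
    exact h.resolve_left hc
  obtain ⟨μ, hscalar⟩ : ∃ μ : ℂ, G = μ • 1 := ⟨_, hG.eq_smul_one_of_commute_ann hcomm⟩
  have htwice : (2 * μ) • ρinf = ρ - ρinf := by
    rw [← hLyap, hscalar]
    simp only [mul_smul_comm, smul_mul_assoc, mul_one, one_mul]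
    module
  have hzero : μ = 0 := by
    have := congrArg trace htwice
    rw [trace_smul, trace_sub, htr, htrinf, smul_eq_mul, mul_one, sub_self] at this
    simpa using this
  have hG0 : G = 0 := by rw [hscalar, hzero, zero_smul]
  refine ⟨hG0, ?_⟩
  rwa [hG0, mul_zero, zero_mul, add_zero, eq_comm, sub_eq_zero] at hLyap

theorem vanishing_dissipation_forces_equilibrium {n m : ℕ}
    (L : Fin m → Matrix (Fin (n+1)) (Fin (n+1)) ℂ)
    (c : ℂ) (hc : c ≠ 0) (k₀ : Fin m) (hk₀ : L k₀ = c • ann n)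
    (ρinf ρ G : Matrix (Fin (n+1)) (Fin (n+1)) ℂ)
    (hρinf : ρinf.PosDef) (htrinf : ρinf.trace = 1)
    (hρ : ρ.IsHermitian) (htr : ρ.trace = 1)
    (hG : G.IsHermitian) (hLyap : ρinf * G + G * ρinf = ρ - ρinf)
    (hdiss : ∑ k, ((G * L k - L k * G) * ρinf * (G * L k - L k * G)ᴴ).trace = 0) :
    G = 0 ∧ ρ = ρinf :=
  vanishing_dissipation_forces_equilibrium_general L c hc k₀ hk₀ ρinf ρ G hρinf htrinf htr hG hLyap
    hdiss
end
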